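/- arXiv:1310.4326 — 2 statements merged into one kernel-verified Lean document; each statement's English description precedes it below -/
import Mathlib

section
/- For k ∈ ℝ, the complex numbers λ₁(k) = −k²m − w₀ki and λ_{2,3}(k) = −(r₀² + k² + (w₀ + 2θ₀(c₀+c₁r₀))ki) ± √(r₀⁴ − c₁r₀(c₀+c₁r₀)k⁴ + r₀[c₀θ₀² + r₀²v'(r₀) + 2r₀v(r₀)]k + 2r₀θ₀c₁k³ i) satisfy: if k²m > 0, 2(r₀²+k²)² ≥ a, and 4(r₀²+k²)⁴ − 4a(r₀²+k²)² > b², where a = r₀⁴ − c₁r₀(c₀+c₁r₀)k⁴ + r₀[c₀θ₀² + r₀²v'(r₀) + 2r₀v(r₀)]k and b = 2r₀θ₀c₁k³, then Re λ₁(k) < 0 and Re λ_{2,3}(k) < 0. -/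
/-! The real part of the principal square root of `z` is `√((‖z‖ + Re z) / 2)`, which is nonnegative,
so `λ₃` is harmless and `λ₂` is the only branch to control. Writing `c = r₀² + k²`, the hypothesis
`b² < 4c⁴ - 4ac²` is exactly `‖a + bi‖ < 2c² - a` after squaring, i.e. `√((‖a + bi‖ + a) / 2) < c`. -/

namespace Complex

lemma re_cpow_inv_two_nonneg (z : ℂ) : 0 ≤ (z ^ (2⁻¹ : ℂ)).re :=
  cpow_inv_two_re z ▸ Real.sqrt_nonneg _

lemma re_cpow_inv_two_lt {z : ℂ} {c : ℝ} (hc : 0 ≤ c)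
    (h : z.im ^ 2 < 4 * c ^ 4 - 4 * z.re * c ^ 2) : (z ^ (2⁻¹ : ℂ)).re < c := by
  have hc_pos : 0 < c := lt_of_le_of_ne hc (by rintro rfl; nlinarith [sq_nonneg z.im])
  have hre : z.re < c ^ 2 := by nlinarith [sq_nonneg z.im, sq_nonneg c]
  have hnorm : ‖z‖ < 2 * c ^ 2 - z.re := by
    rw [norm_def, normSq_apply, Real.sqrt_lt' (by nlinarith)]
    nlinarith
  rw [cpow_inv_two_re, Real.sqrt_lt' hc_pos]
  linarith

end Complex

theorem eigenvalues_neg_re_general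
    (m w₀ r₀ θ₀ c₀ c₁ k : ℝ)
    (a b : ℝ)
    (h1 : 0 < k ^ 2 * m)
    (h3 : b ^ 2 < 4 * (r₀ ^ 2 + k ^ 2) ^ 4 - 4 * a * (r₀ ^ 2 + k ^ 2) ^ 2)
    (lam₁ lam₂ lam₃ : ℂ)
    (hl1 : lam₁ = -((k ^ 2 * m : ℝ) : ℂ) - ((w₀ * k : ℝ) : ℂ) * Complex.I)
    (hl2 : lam₂ = -(((r₀ ^ 2 + k ^ 2 : ℝ)) : ℂ)
        - (((w₀ + 2 * θ₀ * (c₀ + c₁ * r₀)) * k : ℝ) : ℂ) * Complex.I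
        + ((a : ℂ) + (b : ℂ) * Complex.I) ^ ((1 : ℂ) / 2))
    (hl3 : lam₃ = -(((r₀ ^ 2 + k ^ 2 : ℝ)) : ℂ)
        - (((w₀ + 2 * θ₀ * (c₀ + c₁ * r₀)) * k : ℝ) : ℂ) * Complex.I
        - ((a : ℂ) + (b : ℂ) * Complex.I) ^ ((1 : ℂ) / 2)) :
    lam₁.re < 0 ∧ lam₂.re < 0 ∧ lam₃.re < 0 := by
  set z : ℂ := a + b * Complex.I
  have hz : z.re = a ∧ z.im = b := by simp [z]
  have hc : 0 ≤ r₀ ^ 2 + k ^ 2 := by positivity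
  have hroot_lt : (z ^ (2⁻¹ : ℂ)).re < r₀ ^ 2 + k ^ 2 :=
    Complex.re_cpow_inv_two_lt hc (by rwa [hz.1, hz.2])
  have hroot_nonneg := Complex.re_cpow_inv_two_nonneg z
  rw [one_div] at hl2 hl3
  subst hl1 hl2 hl3
  simp only [Complex.sub_re, Complex.add_re, Complex.neg_re, Complex.ofReal_re,
    Complex.re_ofReal_mul, Complex.I_re, mul_zero, sub_zero]
  exact ⟨by linarith, by linarith, by linarith⟩

/-- Spectral stability: under the stated conditions the three eigenvalue branches
have negative real part. Here `v0 = v(r₀)` and `vp = v'(r₀)`. -/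
theorem eigenvalues_neg_re
    (m w₀ r₀ θ₀ c₀ c₁ v0 vp k : ℝ) (hk : k ≠ 0)
    (a b : ℝ)
    (ha : a = r₀ ^ 4 - c₁ * r₀ * (c₀ + c₁ * r₀) * k ^ 4
        + r₀ * (c₀ * θ₀ ^ 2 + r₀ ^ 2 * vp + 2 * r₀ * v0) * k)
    (hb : b = 2 * r₀ * θ₀ * c₁ * k ^ 3)
    (h1 : 0 < k ^ 2 * m)
    (h2 : a ≤ 2 * (r₀ ^ 2 + k ^ 2) ^ 2)
    (h3 : b ^ 2 < 4 * (r₀ ^ 2 + k ^ 2) ^ 4 - 4 * a * (r₀ ^ 2 + k ^ 2) ^ 2)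
    (lam₁ lam₂ lam₃ : ℂ)
    (hl1 : lam₁ = -((k ^ 2 * m : ℝ) : ℂ) - ((w₀ * k : ℝ) : ℂ) * Complex.I)
    (hl2 : lam₂ = -(((r₀ ^ 2 + k ^ 2 : ℝ)) : ℂ)
        - (((w₀ + 2 * θ₀ * (c₀ + c₁ * r₀)) * k : ℝ) : ℂ) * Complex.I
        + ((a : ℂ) + (b : ℂ) * Complex.I) ^ ((1 : ℂ) / 2))
    (hl3 : lam₃ = -(((r₀ ^ 2 + k ^ 2 : ℝ)) : ℂ)
        - (((w₀ + 2 * θ₀ * (c₀ + c₁ * r₀)) * k : ℝ) : ℂ) * Complex.I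
        - ((a : ℂ) + (b : ℂ) * Complex.I) ^ ((1 : ℂ) / 2)) :
    lam₁.re < 0 ∧ lam₂.re < 0 ∧ lam₃.re < 0 :=
  eigenvalues_neg_re_general m w₀ r₀ θ₀ c₀ c₁ k a b h1 h3 lam₁ lam₂ lam₃ hl1 hl2 hl3
end

section
/- Let a, b ∈ ℝ and R > 0 satisfy 2R² ≥ a and 4R⁴ − 4aR² > b². Then −R + (1/√2)·(√(a²+b²) + a)^{1/2} < 0; that is, the real part of −R + √(a+bi) (principal square root) is negative. -/
/-!
The real part of the principal square root of `a + b i` is `√((|a + b i| + a) / 2)`, so both claims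
reduce to `√(a² + b²) + a < 2R²`. Since `4R⁴ - 4aR² = (2R² - a)² - a²`, the hypothesis on `b²` says
exactly that `a² + b² < (2R² - a)²`, and it forces `a < R²`, so that `2R² - a > 0`.
-/

open Complex

lemma Real.sqrt_sq_add_sq_add_lt {a b c : ℝ} (hc : 0 ≤ c) (h : b ^ 2 < c ^ 2 - 2 * a * c) :
    √(a ^ 2 + b ^ 2) + a < c := by
  have hca : 0 < c - a := by nlinarith [sq_nonneg b, sq_nonneg a]
  have : √(a ^ 2 + b ^ 2) < c - a := (Real.sqrt_lt' hca).2 (by nlinarith)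
  linarith

lemma Real.one_div_sqrt_two_mul_sqrt (x : ℝ) : 1 / √2 * √x = √(x / 2) := by
  rw [Real.sqrt_div' x zero_le_two, one_div_mul_eq_div]

lemma Complex.norm_ofReal_add_ofReal_mul_I (a b : ℝ) : ‖(a : ℂ) + b * I‖ = √(a ^ 2 + b ^ 2) := by
  rw [norm_def, normSq_add_mul_I, sq, sq]

lemma Complex.cpow_one_half_ofReal_add_ofReal_mul_I_re (a b : ℝ) :
    (((a : ℂ) + b * I) ^ ((1 : ℂ) / 2)).re = 1 / √2 * √(√(a ^ 2 + b ^ 2) + a) := by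
  rw [one_div (2 : ℂ), cpow_inv_two_re, norm_ofReal_add_ofReal_mul_I,
    Real.one_div_sqrt_two_mul_sqrt]
  simp

theorem stability_inequality_general (a b R : ℝ) (hR : 0 < R)
    (h2 : b ^ 2 < 4 * R ^ 4 - 4 * a * R ^ 2) :
    -R + (1 / Real.sqrt 2) * Real.sqrt (Real.sqrt (a ^ 2 + b ^ 2) + a) < 0 ∧
    ((-(R : ℂ)) + ((a : ℂ) + (b : ℂ) * Complex.I) ^ ((1 : ℂ) / 2)).re < 0 := by
  have hlt : √(a ^ 2 + b ^ 2) + a < 2 * R ^ 2 :=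
    Real.sqrt_sq_add_sq_add_lt (by positivity) (by linarith)
  have hreal : -R + 1 / √2 * √(√(a ^ 2 + b ^ 2) + a) < 0 := by
    have : √((√(a ^ 2 + b ^ 2) + a) / 2) < R := (Real.sqrt_lt' hR).2 (by linarith)
    rw [Real.one_div_sqrt_two_mul_sqrt]
    linarith
  refine ⟨hreal, ?_⟩
  rwa [add_re, neg_re, ofReal_re, cpow_one_half_ofReal_add_ofReal_mul_I_re]

/-- Key stability inequality: if `2R² ≥ a` and `4R⁴ − 4aR² > b²` with `R > 0`, then
`−R + (1/√2)(√(a²+b²)+a)^{1/2} < 0`, i.e. `Re(−R + √(a+bi)) < 0`. -/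
theorem stability_inequality (a b R : ℝ) (hR : 0 < R)
    (h1 : a ≤ 2 * R ^ 2) (h2 : b ^ 2 < 4 * R ^ 4 - 4 * a * R ^ 2) :
    -R + (1 / Real.sqrt 2) * Real.sqrt (Real.sqrt (a ^ 2 + b ^ 2) + a) < 0 ∧
    ((-(R : ℂ)) + ((a : ℂ) + (b : ℂ) * Complex.I) ^ ((1 : ℂ) / 2)).re < 0 :=
  stability_inequality_general a b R hR h2
end
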